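/- arXiv:1706.05822 — 2 statements merged into one kernel-verified Lean document; each statement's English description precedes it below -/
import Mathlib

section
/- Let R be a (not necessarily commutative) ring, let p ∈ R be an idempotent (p² = p), and let q ∈ R. If (p - q)^N = 0 for some positive integer N, then p lies in the two-sided ideal of R generated by q; more precisely, p is a finite sum of products each of which contains q as a factor. -/
/-! Modulo the two-sided ideal generated by `q`, the idempotent `p` is congruent to `p - q`,
so `p = p ^ N ≡ (p - q) ^ N = 0`. -/

namespace TwoSidedIdeal

variable {R : Type*} [Ring R]

theorem exists_fin_sum_of_mem_span_singleton {q x : R} (hx : x ∈ span {q}) :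
    ∃ (m : ℕ) (a b : Fin m → R), x = ∑ i, a i * q * b i := by
  induction hx using span_induction with
  | mem x hx => exact ⟨1, ![1], ![1], by simpa using hx⟩
  | zero => exact ⟨0, ![], ![], by simp⟩
  | add x y _ _ hx hy =>
    obtain ⟨m, a, b, rfl⟩ := hx
    obtain ⟨n, c, d, rfl⟩ := hy
    exact ⟨m + n, Fin.append a c, Fin.append b d, by simp [Fin.sum_univ_add]⟩
  | neg x _ hx =>
    obtain ⟨m, a, b, rfl⟩ := hx
    exact ⟨m, -a, b, by simp⟩
  | left_absorb r x _ hx =>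
    obtain ⟨m, a, b, rfl⟩ := hx
    exact ⟨m, fun i => r * a i, b, by simp [Finset.mul_sum, mul_assoc]⟩
  | right_absorb r x _ hx =>
    obtain ⟨m, a, b, rfl⟩ := hx
    exact ⟨m, a, fun i => b i * r, by simp [Finset.sum_mul, mul_assoc]⟩

end TwoSidedIdeal

theorem IsIdempotentElem.mem_of_sub_pow_eq_zero {R : Type*} [Ring R] {I : TwoSidedIdeal R}
    {p q : R} (hp : IsIdempotentElem p) (hq : q ∈ I) {N : ℕ} (hN : N ≠ 0)
    (h : (p - q) ^ N = 0) : p ∈ I := by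
  have hcongr : I.ringCon p (p - q) := (I.rel_iff _ _).2 (by simpa using hq)
  have hpow := I.ringCon.pow N hcongr
  rwa [hp.pow_eq hN, h] at hpow

/-- If `p` is idempotent and `(p - q)^N = 0` for some `N > 0`, then `p` is a finite
sum of products `aᵢ * q * bᵢ`, i.e. `p` lies in the two-sided ideal generated by `q`. -/
theorem stmt_0 {R : Type*} [Ring R] (p q : R) (hp : p * p = p)
    (N : ℕ) (hN : 0 < N) (h : (p - q) ^ N = 0) :
    ∃ (m : ℕ) (a b : Fin m → R), p = ∑ i, a i * q * b i :=
  TwoSidedIdeal.exists_fin_sum_of_mem_span_singleton <|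
    IsIdempotentElem.mem_of_sub_pow_eq_zero hp (TwoSidedIdeal.subset_span rfl) hN.ne' h
end

section
/- Let R be a ring, let π, π̂ ∈ R, and suppose π is idempotent and (π − π̂)^N = 0 for some N ≥ 1. Let M be a left R-module and W ⊆ M a submodule with π̂ · (r · w) = 0 for all r ∈ R and w ∈ W. Then π · w = 0 for all w ∈ W. -/
/-! Since `W` is a submodule, the hypothesis says that `π̂` kills `W`, so `π` and `π - π̂` agree on
`W`; as both preserve `W`, so do all their powers. Hence `π = π ^ N` acts on `W` as
`(π - π̂) ^ N = 0`. -/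

theorem Submodule.pow_smul_eq_of_sub_smul_eq_zero {R M : Type*} [Ring R] [AddCommGroup M]
    [Module R M] (W : Submodule R M) {p q : R} (hpq : ∀ w ∈ W, (p - q) • w = 0) (n : ℕ) :
    ∀ w ∈ W, p ^ n • w = q ^ n • w := by
  induction n with
  | zero => simp
  | succ n ih =>
    intro w hw
    have hpw : p • w = q • w := sub_eq_zero.mp (by rw [← sub_smul]; exact hpq w hw)
    rw [pow_succ, pow_succ, mul_smul, mul_smul, hpw, ih _ (W.smul_mem q hw)]

/-- If `π` is idempotent, `(π - π̂)^N = 0`, and `π̂` kills `r • w` for every `r : R`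
and `w` in a submodule `W`, then `π` kills `W`. -/
theorem stmt_15 {R : Type*} [Ring R] {M : Type*} [AddCommGroup M] [Module R M]
    (π πh : R) (hπ : π * π = π) (N : ℕ) (hN : 1 ≤ N) (hnilp : (π - πh) ^ N = 0)
    (W : Submodule R M) (h : ∀ (r : R), ∀ w ∈ W, πh • (r • w) = 0) :
    ∀ w ∈ W, π • w = 0 := by
  intro w hw
  have hπh : ∀ v ∈ W, (π - (π - πh)) • v = 0 := fun v hv => by
    simpa using h 1 v hv
  calc π • w = π ^ N • w := by rw [IsIdempotentElem.pow_eq hπ (by omega)]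
    _ = (π - πh) ^ N • w := W.pow_smul_eq_of_sub_smul_eq_zero hπh N w hw
    _ = 0 := by rw [hnilp, zero_smul]
end
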